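/- arXiv:2301.06237 — 2 statements merged into one kernel-verified Lean document; each statement's English description precedes it below -/
import Mathlib

section
/- Let Σ be an alphabet with at least two distinct letters. For every Boolean combination φ of word equations (grammar: t ::= n | α | t∘t with n ∈ Σ and α a sequence variable; φ ::= t == t | ¬φ | φ∧φ | φ∨φ) there exist word-equation terms U and V, built from letters of Σ, the sequence variables of φ, and finitely many fresh sequence variables β1,…,βl, such that for every assignment s of the sequence variables of φ into Σ*: s satisfies φ if and only if there exist words w1,…,wl ∈ Σ* such that the assignment s extended by βi ↦ wi satisfies the single word equation U == V. -/
/-!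
The satisfaction sets of `φ` and of `¬φ` are shown, simultaneously by induction on `φ`, to be
projections of solution sets of single word equations.

Conjunction: since `a ≠ b`, the word `x a y x b y` determines `(x, y)`, so two equations
collapse into one.

Disjunction: if `A` and `B` are prefixes of `g A` and `g B` for a nonempty `g`, both are prefixes
of `g g g ⋯`, hence equal when `|A| = |B|`. Applied to `A = x a y x b y` and `B = y a x y b x`,
a word `g` "guards" the equation `x = y`: any `g ≠ []` forces it, while `g = []` imposes nothing
and `g = A` works once `x = y`. Then `x = y ∨ u = v` holds iff there are guards `g₁` of `x = y`
and `g₂` of `u = v` with `a ∈ g₁ g₂`.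

Inequality: `x ≠ y` iff one word extends the other by a letter or both extend a common prefix by
distinct letters `c ≠ d`; this is a finite disjunction because `Σ` is finite.
-/

/-- Word-equation terms over alphabet `σ` and sequence variables `ν`. -/
inductive WTerm (σ ν : Type*) : Type _
  | letter : σ → WTerm σ ν
  | svar : ν → WTerm σ ν
  | conc : WTerm σ ν → WTerm σ ν → WTerm σ ν

/-- Value of a term under an assignment of words to the sequence variables. -/
def WTerm.eval {σ ν : Type*} (s : ν → List σ) : WTerm σ ν → List σ
  | .letter c => [c]
  | .svar a => s a
  | .conc t₁ t₂ => t₁.eval s ++ t₂.eval s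

/-- Boolean combinations of word equations. -/
inductive WFormula (σ ν : Type*) : Type _
  | eq : WTerm σ ν → WTerm σ ν → WFormula σ ν
  | not : WFormula σ ν → WFormula σ ν
  | and : WFormula σ ν → WFormula σ ν → WFormula σ ν
  | or : WFormula σ ν → WFormula σ ν → WFormula σ ν

/-- Classical satisfaction of a Boolean combination of word equations. -/
def WFormula.Sat {σ ν : Type*} (s : ν → List σ) : WFormula σ ν → Prop
  | .eq t₁ t₂ => t₁.eval s = t₂.eval s
  | .not φ => ¬ φ.Sat s
  | .and φ₁ φ₂ => φ₁.Sat s ∧ φ₂.Sat s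
  | .or φ₁ φ₂ => φ₁.Sat s ∨ φ₂.Sat s

namespace WordEquation

variable {σ : Type*} {a b : σ}

def encodePair (a b : σ) (x y : List σ) : List σ := x ++ a :: y ++ (x ++ b :: y)

theorem eq_and_eq_of_append_cons (hab : a ≠ b) {x y x' y' : List σ}
    (ha : x ++ a :: y = x' ++ a :: y') (hb : x ++ b :: y = x' ++ b :: y') :
    x = x' ∧ y = y' := by
  suffices hlen : x.length = x'.length by
    obtain ⟨hx, hy⟩ := List.append_inj ha hlen
    exact ⟨hx, List.cons_injective hy⟩
  by_contra hne
  wlog hlt : x.length < x'.length generalizing x y x' y'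
  · exact this ha.symm hb.symm (Ne.symm hne) (by omega)
  -- Position `x.length` holds `a` in the first equation and `b` in the second.
  have hx' : ∀ c (z : List σ), (x' ++ c :: z)[x.length]? = x'[x.length]? := fun _ _ =>
    List.getElem?_append_left hlt
  have hca : (x ++ a :: y)[x.length]? = some a := by simp
  have hcb : (x ++ b :: y)[x.length]? = some b := by simp
  rw [ha, hx'] at hca
  rw [hb, hx', hca] at hcb
  exact hab (Option.some.inj hcb)

theorem encodePair_inj (hab : a ≠ b) {x y x' y' : List σ} :
    encodePair a b x y = encodePair a b x' y' ↔ x = x' ∧ y = y' := by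
  refine ⟨fun h => ?_, by rintro ⟨rfl, rfl⟩; rfl⟩
  have hlen := congrArg List.length h
  simp only [encodePair, List.length_append, List.length_cons] at hlen
  obtain ⟨ha, hb⟩ := List.append_inj h (by simp; omega)
  exact eq_and_eq_of_append_cons hab ha hb

theorem length_encodePair_swap (a b : σ) (x y : List σ) :
    (encodePair a b x y).length = (encodePair a b y x).length := by
  simp [encodePair]; omega

theorem mem_encodePair (a b : σ) (x y : List σ) : a ∈ encodePair a b x y := by
  simp [encodePair]

theorem getElem?_eq_of_prefix_append_self {g A : List σ} (hg : g ≠ []) (h : A <+: g ++ A)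
    (i : ℕ) (hi : i < A.length) : A[i]? = g[i % g.length]? := by
  induction i using Nat.strong_induction_on with
  | _ i ih =>
    have hA : A[i]? = (g ++ A)[i]? := by
      rw [List.prefix_iff_getElem?.1 h i hi, List.getElem?_eq_getElem hi]
    rcases lt_or_ge i g.length with hlt | hge
    · rw [hA, List.getElem?_append_left hlt, Nat.mod_eq_of_lt hlt]
    · have hg' := List.length_pos_of_ne_nil hg
      rw [hA, List.getElem?_append_right hge, ih _ (by omega) (by omega),
        ← Nat.mod_eq_sub_mod hge]

theorem eq_of_prefix_append_self {g A B : List σ} (hg : g ≠ []) (hA : A <+: g ++ A)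
    (hB : B <+: g ++ B) (hlen : A.length = B.length) : A = B := by
  refine List.ext_getElem? fun i => ?_
  rcases lt_or_ge i A.length with hi | hi
  · rw [getElem?_eq_of_prefix_append_self hg hA i hi,
      getElem?_eq_of_prefix_append_self hg hB i (hlen ▸ hi)]
  · rw [List.getElem?_eq_none hi, List.getElem?_eq_none (hlen ▸ hi)]

def Guarded (a b : σ) (g x y : List σ) : Prop :=
  encodePair a b x y <+: g ++ encodePair a b x y ∧ encodePair a b y x <+: g ++ encodePair a b y x

theorem guarded_nil (a b : σ) (x y : List σ) : Guarded a b [] x y :=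
  ⟨List.prefix_rfl, List.prefix_rfl⟩

theorem guarded_encodePair_self (a b : σ) (x : List σ) : Guarded a b (encodePair a b x x) x x :=
  ⟨List.prefix_append _ _, List.prefix_append _ _⟩

theorem Guarded.eq (hab : a ≠ b) {g x y : List σ} (hg : g ≠ []) (h : Guarded a b g x y) :
    x = y :=
  ((encodePair_inj hab).1
    (eq_of_prefix_append_self hg h.1 h.2 (length_encodePair_swap a b x y))).1

theorem eq_or_eq_iff_exists_guarded (hab : a ≠ b) (x y u v : List σ) :
    x = y ∨ u = v ↔ ∃ g₁ g₂, a ∈ g₁ ++ g₂ ∧ Guarded a b g₁ x y ∧ Guarded a b g₂ u v := by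
  constructor
  · rintro (rfl | rfl)
    · exact ⟨_, [], by simp [mem_encodePair], guarded_encodePair_self a b x, guarded_nil a b u v⟩
    · exact ⟨[], _, by simp [mem_encodePair], guarded_nil a b x y, guarded_encodePair_self a b u⟩
  · rintro ⟨g₁, g₂, ha, h₁, h₂⟩
    rcases eq_or_ne g₁ [] with rfl | hg₁
    · exact Or.inr (h₂.eq hab (List.ne_nil_of_mem ha))
    · exact Or.inl (h₁.eq hab hg₁)

theorem ne_iff_exists_prefix (x y : List σ) :
    x ≠ y ↔ (∃ c, x ++ [c] <+: y) ∨ (∃ c, y ++ [c] <+: x) ∨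
      ∃ c d, c ≠ d ∧ ∃ p, p ++ [c] <+: x ∧ p ++ [d] <+: y := by
  constructor
  · intro hne
    induction x generalizing y with
    | nil =>
      obtain _ | ⟨d, y⟩ := y
      · exact absurd rfl hne
      · exact Or.inl ⟨d, by simp⟩
    | cons c x ih =>
      obtain _ | ⟨d, y⟩ := y
      · exact Or.inr (Or.inl ⟨c, by simp⟩)
      by_cases hcd : c = d
      · subst hcd
        rcases ih y (fun h => hne (h ▸ rfl)) with ⟨e, h⟩ | ⟨e, h⟩ | ⟨e, f, hef, p, hx, hy⟩
        · exact Or.inl ⟨e, by simpa using h⟩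
        · exact Or.inr (Or.inl ⟨e, by simpa using h⟩)
        · exact Or.inr (Or.inr ⟨e, f, hef, c :: p, by simpa using hx, by simpa using hy⟩)
      · exact Or.inr (Or.inr ⟨c, d, hcd, [], by simp, by simp⟩)
  · rintro (⟨c, h⟩ | ⟨c, h⟩ | ⟨c, d, hcd, p, hx, hy⟩) rfl
    · simpa using h.length_le
    · simpa using h.length_le
    · have := (List.prefix_of_prefix_length_le hx hy (by simp)).eq_of_length (by simp)
      exact hcd (by simpa using this)

end WordEquation

namespace WTerm

variable {σ ν μ : Type*}

def rename (f : ν → μ) : WTerm σ ν → WTerm σ μ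
  | .letter c => .letter c
  | .svar v => .svar (f v)
  | .conc t₁ t₂ => .conc (t₁.rename f) (t₂.rename f)

@[simp]
theorem eval_rename (f : ν → μ) (s : μ → List σ) (t : WTerm σ ν) :
    (t.rename f).eval s = t.eval (s ∘ f) := by
  induction t with
  | letter => rfl
  | svar => rfl
  | conc t₁ t₂ ih₁ ih₂ => simp only [rename, eval, ih₁, ih₂]

def encodePair (a b : σ) (t u : WTerm σ ν) : WTerm σ ν :=
  .conc (.conc t (.conc (.letter a) u)) (.conc t (.conc (.letter b) u))

@[simp]
theorem eval_encodePair (a b : σ) (t u : WTerm σ ν) (s : ν → List σ) :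
    (encodePair a b t u).eval s = WordEquation.encodePair a b (t.eval s) (u.eval s) := by
  simp [encodePair, eval, WordEquation.encodePair]

end WTerm

namespace WordEquation

variable {σ ν : Type*} {a b : σ}

def Expressible (P : (ν → List σ) → Prop) : Prop :=
  ∃ (l : ℕ) (U V : WTerm σ (ν ⊕ Fin l)),
    ∀ s, P s ↔ ∃ w : Fin l → List σ, U.eval (Sum.elim s w) = V.eval (Sum.elim s w)

theorem Expressible.of_iff {P Q : (ν → List σ) → Prop} (h : ∀ s, P s ↔ Q s)
    (hP : Expressible P) : Expressible Q := by
  obtain ⟨l, U, V, hUV⟩ := hP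
  exact ⟨l, U, V, fun s => (h s).symm.trans (hUV s)⟩

theorem expressible_eval_eq (t u : WTerm σ ν) : Expressible fun s => t.eval s = u.eval s :=
  ⟨0, t.rename Sum.inl, u.rename Sum.inl, fun s => by simp [Sum.elim_comp_inl]⟩

theorem expressible_false (hab : a ≠ b) : Expressible fun _ : ν → List σ => False :=
  (expressible_eval_eq (.letter a) (.letter b)).of_iff fun _ => by simp [WTerm.eval, hab]

theorem expressible_prefix (t u : WTerm σ ν) : Expressible fun s => t.eval s <+: u.eval s :=
  ⟨1, .conc (t.rename Sum.inl) (.svar (.inr 0)), u.rename Sum.inl, fun s => by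
    simp [WTerm.eval, Sum.elim_comp_inl, List.IsPrefix, Fin.exists_fin_succ_pi]⟩

theorem expressible_mem (c : σ) (t : WTerm σ ν) : Expressible fun s => c ∈ t.eval s :=
  ⟨2, t.rename Sum.inl, .conc (.svar (.inr 0)) (.conc (.letter c) (.svar (.inr 1))), fun s => by
    simp [WTerm.eval, Sum.elim_comp_inl, List.mem_iff_append, Fin.exists_fin_succ_pi]⟩

theorem exists_fin_append_iff {α : Type*} {m n : ℕ} {p : (Fin (m + n) → α) → Prop} :
    (∃ w, p w) ↔ ∃ w₁ w₂, p (Fin.append w₁ w₂) := by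
  rw [(Fin.appendEquiv m n).surjective.exists, Prod.exists]
  rfl

theorem elim_append_comp_castAdd {α : Type*} (s : ν → α) {m n : ℕ} (w₁ : Fin m → α)
    (w₂ : Fin n → α) :
    Sum.elim s (Fin.append w₁ w₂) ∘ Sum.map id (Fin.castAdd n) = Sum.elim s w₁ := by
  ext (_ | _) <;> simp

theorem elim_append_comp_natAdd {α : Type*} (s : ν → α) {m n : ℕ} (w₁ : Fin m → α)
    (w₂ : Fin n → α) :
    Sum.elim s (Fin.append w₁ w₂) ∘ Sum.map id (Fin.natAdd m) = Sum.elim s w₂ := by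
  ext (_ | _) <;> simp

theorem Expressible.exists_fresh {k : ℕ} {P : (ν ⊕ Fin k → List σ) → Prop}
    (hP : Expressible P) : Expressible fun s => ∃ w : Fin k → List σ, P (Sum.elim s w) := by
  obtain ⟨l, U, V, hUV⟩ := hP
  let e : (ν ⊕ Fin k) ⊕ Fin l → ν ⊕ Fin (k + l) :=
    Sum.elim (Sum.map id (Fin.castAdd l)) (Sum.inr ∘ Fin.natAdd k)
  have he (s : ν → List σ) w₁ (w₂ : Fin l → List σ) :
      Sum.elim s (Fin.append w₁ w₂) ∘ e = Sum.elim (Sum.elim s w₁) w₂ := by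
    ext ((_ | _) | _) <;> simp [e]
  refine ⟨k + l, U.rename e, V.rename e, fun s => ?_⟩
  simp only [hUV, WTerm.eval_rename, exists_fin_append_iff (p := fun w => _ = _), he]

theorem expressible_eval_eq_and_eval_eq (hab : a ≠ b) (t₁ t₂ t₃ t₄ : WTerm σ ν) :
    Expressible fun s => t₁.eval s = t₂.eval s ∧ t₃.eval s = t₄.eval s :=
  (expressible_eval_eq (.encodePair a b t₁ t₃) (.encodePair a b t₂ t₄)).of_iff fun s => by
    simp [encodePair_inj hab]

theorem Expressible.and (hab : a ≠ b) {P Q : (ν → List σ) → Prop} (hP : Expressible P)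
    (hQ : Expressible Q) : Expressible fun s => P s ∧ Q s := by
  obtain ⟨l₁, U₁, V₁, hP⟩ := hP
  obtain ⟨l₂, U₂, V₂, hQ⟩ := hQ
  let ρ₁ : ν ⊕ Fin l₁ → ν ⊕ Fin (l₁ + l₂) := Sum.map id (Fin.castAdd l₂)
  let ρ₂ : ν ⊕ Fin l₂ → ν ⊕ Fin (l₁ + l₂) := Sum.map id (Fin.natAdd l₁)
  refine (expressible_eval_eq_and_eval_eq hab (U₁.rename ρ₁) (V₁.rename ρ₁) (U₂.rename ρ₂)
    (V₂.rename ρ₂)).exists_fresh.of_iff fun s => ?_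
  simp only [WTerm.eval_rename, exists_fin_append_iff (p := fun w => _ ∧ _), ρ₁, ρ₂,
    elim_append_comp_castAdd, elim_append_comp_natAdd, hP, hQ, exists_and_exists_comm]

theorem expressible_guarded (hab : a ≠ b) (g t u : WTerm σ ν) :
    Expressible fun s => Guarded a b (g.eval s) (t.eval s) (u.eval s) :=
  (expressible_prefix (.encodePair a b t u) (.conc g (.encodePair a b t u))).and hab
    (expressible_prefix (.encodePair a b u t) (.conc g (.encodePair a b u t)))

theorem expressible_eval_eq_or_eval_eq (hab : a ≠ b) (t₁ t₂ t₃ t₄ : WTerm σ ν) :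
    Expressible fun s => t₁.eval s = t₂.eval s ∨ t₃.eval s = t₄.eval s := by
  let g₁ : WTerm σ (ν ⊕ Fin 2) := .svar (.inr 0)
  let g₂ : WTerm σ (ν ⊕ Fin 2) := .svar (.inr 1)
  let lift (t : WTerm σ ν) : WTerm σ (ν ⊕ Fin 2) := t.rename Sum.inl
  refine (((expressible_mem a (.conc g₁ g₂)).and hab
    ((expressible_guarded hab g₁ (lift t₁) (lift t₂)).and hab
      (expressible_guarded hab g₂ (lift t₃) (lift t₄)))).exists_fresh).of_iff fun s => ?_
  simpa [g₁, g₂, lift, WTerm.eval, Sum.elim_comp_inl, Fin.exists_fin_succ_pi] using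
    (eq_or_eq_iff_exists_guarded hab _ _ _ _).symm

theorem Expressible.or (hab : a ≠ b) {P Q : (ν → List σ) → Prop} (hP : Expressible P)
    (hQ : Expressible Q) : Expressible fun s => P s ∨ Q s := by
  obtain ⟨l₁, U₁, V₁, hP⟩ := hP
  obtain ⟨l₂, U₂, V₂, hQ⟩ := hQ
  let ρ₁ : ν ⊕ Fin l₁ → ν ⊕ Fin (l₁ + l₂) := Sum.map id (Fin.castAdd l₂)
  let ρ₂ : ν ⊕ Fin l₂ → ν ⊕ Fin (l₁ + l₂) := Sum.map id (Fin.natAdd l₁)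
  refine (expressible_eval_eq_or_eval_eq hab (U₁.rename ρ₁) (V₁.rename ρ₁) (U₂.rename ρ₂)
    (V₂.rename ρ₂)).exists_fresh.of_iff fun s => ?_
  simp only [WTerm.eval_rename, exists_fin_append_iff (p := fun w => _ ∨ _), ρ₁, ρ₂,
    elim_append_comp_castAdd, elim_append_comp_natAdd, hP, hQ, exists_or, exists_const]

theorem Expressible.exists_of_fintype (hab : a ≠ b) {ι : Type*} [Fintype ι]
    {P : ι → (ν → List σ) → Prop} (hP : ∀ i, Expressible (P i)) :
    Expressible fun s => ∃ i, P i s := by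
  classical
  suffices h : ∀ S : Finset ι, Expressible fun s => ∃ i ∈ S, P i s from
    (h Finset.univ).of_iff fun s => by simp
  intro S
  induction S using Finset.induction_on with
  | empty => exact (expressible_false hab).of_iff fun s => by simp
  | insert i S _ ih => exact ((hP i).or hab ih).of_iff fun s => by simp [or_and_right, exists_or]

theorem Expressible.const_and (hab : a ≠ b) (p : Prop) {P : (ν → List σ) → Prop}
    (hP : Expressible P) : Expressible fun s => p ∧ P s := by
  by_cases hp : p
  · exact hP.of_iff fun s => by simp [hp]
  · exact (expressible_false hab).of_iff fun s => by simp [hp]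

theorem expressible_eval_ne [Fintype σ] (hab : a ≠ b) (t u : WTerm σ ν) :
    Expressible fun s => t.eval s ≠ u.eval s := by
  have hlonger (t u : WTerm σ ν) : Expressible fun s => ∃ c, t.eval s ++ [c] <+: u.eval s :=
    Expressible.exists_of_fintype hab fun c => expressible_prefix (.conc t (.letter c)) u
  have hfork : Expressible fun s =>
      ∃ c d, c ≠ d ∧ ∃ p, p ++ [c] <+: t.eval s ∧ p ++ [d] <+: u.eval s := by
    refine Expressible.exists_of_fintype hab fun c => Expressible.exists_of_fintype hab fun d =>
      Expressible.const_and hab _ ?_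
    let p : WTerm σ (ν ⊕ Fin 1) := .svar (.inr 0)
    refine ((expressible_prefix (.conc p (.letter c)) (t.rename .inl)).and hab
      (expressible_prefix (.conc p (.letter d)) (u.rename .inl))).exists_fresh.of_iff fun s => ?_
    simp [p, WTerm.eval, Sum.elim_comp_inl, Fin.exists_fin_succ_pi]
  exact ((hlonger t u).or hab ((hlonger u t).or hab hfork)).of_iff fun s =>
    (ne_iff_exists_prefix _ _).symm

theorem expressible_sat [Fintype σ] (hab : a ≠ b) (φ : WFormula σ ν) :
    Expressible φ.Sat ∧ Expressible fun s => ¬ φ.Sat s := by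
  induction φ with
  | eq t u => exact ⟨expressible_eval_eq t u, expressible_eval_ne hab t u⟩
  | not φ ih => exact ⟨ih.2, ih.1.of_iff fun s => not_not.symm⟩
  | and φ ψ ihφ ihψ =>
    exact ⟨ihφ.1.and hab ihψ.1, (ihφ.2.or hab ihψ.2).of_iff fun s => not_and_or.symm⟩
  | or φ ψ ihφ ihψ =>
    exact ⟨ihφ.1.or hab ihψ.1, (ihφ.2.and hab ihψ.2).of_iff fun s => not_or.symm⟩

end WordEquation

/-- For every Boolean combination `φ` of word equations there are terms `U`,
`V` over the letters, the old sequence variables, and `l` fresh sequence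
variables (the `Sum.inr` ones) such that an assignment `s` satisfies `φ` iff
it can be extended on the fresh variables so as to satisfy the single word
equation `U == V`. -/
theorem boolean_combination_to_single_word_equation
    {σ ν : Type*} [Fintype σ] (a b : σ) (hab : a ≠ b) (φ : WFormula σ ν) :
    ∃ (l : ℕ) (U V : WTerm σ (ν ⊕ Fin l)),
      ∀ s : ν → List σ,
        φ.Sat s ↔
          ∃ w : Fin l → List σ,
            U.eval (Sum.elim s w) = V.eval (Sum.elim s w) :=
  (WordEquation.expressible_sat hab φ).1
end

section
/- Let Σ* be the free monoid over an alphabet Σ containing two distinct letters a ≠ b. For all words x, y, u, v ∈ Σ*: (x = y and u = v) if and only if x·a·u·x·b·u = y·a·v·y·b·v. -/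
/-! Comparing lengths, the equation splits at its middle into `x·a·u = y·a·v` and
`x·b·u = y·b·v`. If `|x| < |y|`, both `a` and `b` are then the letter of `y` at position `|x|`;
so `|x| = |y|` by symmetry, and cancellation gives `x = y` and `u = v`. -/

namespace List

variable {σ : Type*}

theorem getElem_eq_of_append_cons_eq_append {x y u v : List σ} {c : σ}
    (h : x ++ c :: u = y ++ v) (hlt : x.length < y.length) : y[x.length] = c := by
  have hget := congrArg (·[x.length]?) h
  simp only [getElem?_append_left hlt, getElem?_append_right le_rfl, Nat.sub_self,
    getElem?_cons_zero, getElem?_eq_getElem hlt, Option.some_inj] at hget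
  exact hget.symm

theorem eq_and_eq_of_append_cons_eq_of_ne {x y u v : List σ} {a b : σ}
    (ha : x ++ a :: u = y ++ a :: v) (hb : x ++ b :: u = y ++ b :: v) (hab : a ≠ b) :
    x = y ∧ u = v := by
  wlog hle : x.length ≤ y.length generalizing x y u v
  · exact (this ha.symm hb.symm (by omega)).imp Eq.symm Eq.symm
  rcases hle.lt_or_eq with hlt | hlen
  · exact absurd ((getElem_eq_of_append_cons_eq_append ha hlt).symm.trans
      (getElem_eq_of_append_cons_eq_append hb hlt)) hab
  · obtain ⟨hxy, huv⟩ := append_inj ha hlen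
    exact ⟨hxy, (cons_injective huv :)⟩

end List

theorem conj_of_word_equations_as_single_equation
    {σ : Type*} (a b : σ) (hab : a ≠ b) (x y u v : List σ) :
    (x = y ∧ u = v) ↔
      x ++ [a] ++ u ++ x ++ [b] ++ u = y ++ [a] ++ v ++ y ++ [b] ++ v := by
  refine ⟨by rintro ⟨rfl, rfl⟩; rfl, fun h => ?_⟩
  have hsplit : (x ++ a :: u) ++ (x ++ b :: u) = (y ++ a :: v) ++ (y ++ b :: v) := by
    simpa only [List.append_assoc, List.singleton_append] using h
  have hlen : (x ++ a :: u).length = (y ++ a :: v).length := by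
    have := congrArg List.length h
    simp only [List.length_append, List.length_cons] at this ⊢
    omega
  obtain ⟨ha, hb⟩ := List.append_inj hsplit hlen
  exact List.eq_and_eq_of_append_cons_eq_of_ne ha hb hab
end
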